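/- Let p ≥ 1 and for each i ∈ {1, …, p} let g_{i,1}, …, g_{i,q_i} be nonzero real numbers. Then the iterated limit lim_{ζ→∞} lim_{s→∞} tanh(ζ · ∑_{i=1}^{p} ∏_{j=1}^{q_i} σ_s(g_{i,j})) equals 1 if there exists i with g_{i,j} < 0 for all j, and equals 0 otherwise; i.e., the smoothed GRASHS switching function converges to the 0/1 indicator of the DNF condition ⋁_i ⋀_j (g_{i,j} < 0). -/

import Mathlib

/-! As `s → ∞`, `σ_s(g)` tends to the indicator of `g < 0`, so the sum of products tends to the
number `N` of minterms whose predicates all hold. By continuity of `tanh` the inner limit is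
`tanh (ζ * N)`, which tends to `1` as `ζ → ∞` when `N > 0` and is identically `0` when `N = 0`. -/

open Filter

/-- The sigmoid function with slope parameter `s`. -/
noncomputable def sigmoid (s x : ℝ) : ℝ := 1 / (1 + Real.exp (s * x))

open Topology

namespace Real

lemma tendsto_one_div_one_add_exp_atTop :
    Tendsto (fun y => 1 / (1 + exp y)) atTop (𝓝 0) :=
  (tendsto_atTop_add_const_left _ 1 tendsto_exp_atTop).inv_tendsto_atTop.congr
    fun _ => (one_div _).symm

lemma tendsto_one_div_one_add_exp_atBot :
    Tendsto (fun y => 1 / (1 + exp y)) atBot (𝓝 1) := by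
  simpa using (tendsto_exp_atBot.const_add 1).inv₀ (by norm_num)

lemma tanh_eq_one_sub_two_div (x : ℝ) : tanh x = 1 - 2 / (1 + exp (2 * x)) := by
  rw [tanh_eq, show 2 * x = x + x by ring, exp_add, exp_neg]
  have := exp_pos x
  field_simp
  ring

lemma continuous_tanh : Continuous tanh := by
  rw [funext tanh_eq_one_sub_two_div]
  exact continuous_const.sub (continuous_const.div (by fun_prop) fun x => by positivity)

lemma tendsto_tanh_atTop : Tendsto tanh atTop (𝓝 1) := by
  rw [funext tanh_eq_one_sub_two_div]
  simpa [div_eq_mul_inv] using tendsto_const_nhds.sub (tendsto_const_nhds.mul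
    (tendsto_one_div_one_add_exp_atTop.comp (tendsto_id.const_mul_atTop two_pos)))

end Real

lemma tendsto_sigmoid_atTop {x : ℝ} (hx : x ≠ 0) :
    Tendsto (fun s => sigmoid s x) atTop (𝓝 (if x < 0 then 1 else 0)) := by
  rcases hx.lt_or_gt with hneg | hpos
  · rw [if_pos hneg]
    exact Real.tendsto_one_div_one_add_exp_atBot.comp (tendsto_id.atTop_mul_const_of_neg hneg)
  · rw [if_neg hpos.not_gt]
    exact Real.tendsto_one_div_one_add_exp_atTop.comp (tendsto_id.atTop_mul_const hpos)

lemma tendsto_sum_prod_sigmoid_atTop {ι : Type*} [Fintype ι] {κ : ι → Type*}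
    [∀ i, Fintype (κ i)] (g : ∀ i, κ i → ℝ) (hg : ∀ i j, g i j ≠ 0) :
    Tendsto (fun s => ∑ i, ∏ j, sigmoid s (g i j)) atTop
      (𝓝 (Nat.card {i // ∀ j, g i j < 0} : ℝ)) := by
  rw [Nat.card_eq_fintype_card, Fintype.card_subtype, ← Finset.sum_boole]
  refine tendsto_finsetSum _ fun i _ => ?_
  rw [← Fintype.prod_boole]
  exact tendsto_finsetProd _ fun j _ => tendsto_sigmoid_atTop (hg i j)

theorem grashs_switching_iterated_limit_general (p : ℕ)
    (q : Fin p → ℕ) (g : (i : Fin p) → Fin (q i) → ℝ)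
    (hg : ∀ i j, g i j ≠ 0) :
    ∃ L : ℝ → ℝ,
      (∀ ζ : ℝ, Tendsto
        (fun s : ℝ => Real.tanh (ζ * ∑ i : Fin p, ∏ j : Fin (q i), sigmoid s (g i j)))
        atTop (nhds (L ζ))) ∧
      Tendsto L atTop
        (nhds (if (∃ i : Fin p, ∀ j : Fin (q i), g i j < 0) then 1 else 0)) := by
  have hlim := tendsto_sum_prod_sigmoid_atTop g hg
  refine ⟨fun ζ => Real.tanh (ζ * _), fun ζ => (Real.continuous_tanh.tendsto _).comp
    (hlim.const_mul ζ), ?_⟩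
  split_ifs with hsat
  · have : Nonempty {i // ∀ j, g i j < 0} := nonempty_subtype.mpr hsat
    exact Real.tendsto_tanh_atTop.comp
      (tendsto_id.atTop_mul_const (Nat.cast_pos.mpr Nat.card_pos))
  · have : IsEmpty {i // ∀ j, g i j < 0} := ⟨fun ⟨i, hi⟩ => hsat ⟨i, hi⟩⟩
    simp

theorem grashs_switching_iterated_limit (p : ℕ) (hp : 1 ≤ p)
    (q : Fin p → ℕ) (g : (i : Fin p) → Fin (q i) → ℝ)
    (hg : ∀ i j, g i j ≠ 0) :
    ∃ L : ℝ → ℝ,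
      (∀ ζ : ℝ, Tendsto
        (fun s : ℝ => Real.tanh (ζ * ∑ i : Fin p, ∏ j : Fin (q i), sigmoid s (g i j)))
        atTop (nhds (L ζ))) ∧
      Tendsto L atTop
        (nhds (if (∃ i : Fin p, ∀ j : Fin (q i), g i j < 0) then 1 else 0)) :=
  grashs_switching_iterated_limit_general p q g hg
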